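/- arXiv:2506.16212 — 3 statements merged into one kernel-verified Lean document; each statement's English description precedes it below -/
import Mathlib

section
/- Define g₁(s,u) = 208s⁶ + 16u(1−s²)[132s⁴ + 6s²(50−41s²)u + 4(35s⁴−61s²+44)u² + 9s²(1−s²)u³] + 288s(1−s²)(1−u²)[(1−s²)u² + 2(3+s²)u + 3s²] + 1152(1−s²)(1−u²)[2(1−s²)u + s²]. Then g₁(s,u) ≤ 2816 for all (s,u) ∈ [0,1] × [0,1]. -/
/-!
Expand `2816 - g₁` in the tensor-product Bernstein basis of bidegree `(6, 4)` on the unit square.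
All of its coefficients turn out to be nonnegative, and Bernstein polynomials are nonnegative on
`[0, 1]`, so `2816 - g₁ ≥ 0` there. There is no room to spare: the only basis element not vanishing
at `(0, 1)` is `bernstein 6 0 ⊗ bernstein 4 4`, and its coefficient is `0`.
-/

open unitInterval

theorem sum_mul_bernstein_mul_bernstein_nonneg {m n : ℕ} (b : Fin (m + 1) → Fin (n + 1) → ℝ)
    (hb : ∀ i j, 0 ≤ b i j) (x y : I) :
    0 ≤ ∑ i, ∑ j, b i j * bernstein m i x * bernstein n j y :=
  Finset.sum_nonneg fun i _ => Finset.sum_nonneg fun j _ =>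
    mul_nonneg (mul_nonneg (hb i j) bernstein_nonneg) bernstein_nonneg

noncomputable def g₁ (s u : ℝ) : ℝ :=
  208 * s ^ 6
    + 16 * u * (1 - s ^ 2) * (132 * s ^ 4 + 6 * s ^ 2 * (50 - 41 * s ^ 2) * u
        + 4 * (35 * s ^ 4 - 61 * s ^ 2 + 44) * u ^ 2 + 9 * s ^ 2 * (1 - s ^ 2) * u ^ 3)
    + 288 * s * (1 - s ^ 2) * (1 - u ^ 2) * ((1 - s ^ 2) * u ^ 2
        + 2 * (3 + s ^ 2) * u + 3 * s ^ 2)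
    + 1152 * (1 - s ^ 2) * (1 - u ^ 2) * (2 * (1 - s ^ 2) * u + s ^ 2)

/- If `2816 - g₁ = ∑ q a b * s ^ a * u ^ b`, then the entry `(i, j)` is
`∑ a ≤ i, ∑ b ≤ j, (i.choose a * j.choose b) / (choose 6 a * choose 4 b) * q a b`. -/
noncomputable def g₁BernsteinCoeff : Fin 7 → Fin 5 → ℝ :=
  ![![2816, 2240, 1664, 960, 0],
    ![2816, 2168, 1512, 792, 0],
    ![13696 / 5, 2096, 20944 / 15, 3456 / 5, 592 / 5],
    ![12712 / 5, 9976 / 5, 6572 / 5, 3396 / 5, 1776 / 5],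
    ![11296 / 5, 1840, 19168 / 15, 4112 / 5, 3808 / 5],
    ![2144, 1776, 1472, 1328, 1440],
    ![2608, 2608, 2608, 2608, 2608]]

theorem g₁BernsteinCoeff_nonneg (i : Fin 7) (j : Fin 5) : 0 ≤ g₁BernsteinCoeff i j := by
  fin_cases i <;> fin_cases j <;> norm_num [g₁BernsteinCoeff]

theorem sub_g₁_eq_sum_bernstein (x y : I) :
    2816 - g₁ x y =
      ∑ i, ∑ j, g₁BernsteinCoeff i j * bernstein 6 i x * bernstein 4 j y := by
  simp only [Fin.sum_univ_seven, Fin.sum_univ_five, bernstein_apply, g₁,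
    g₁BernsteinCoeff, Matrix.cons_val]
  norm_num [Nat.choose_eq_factorial_div_factorial, Nat.factorial]
  ring

theorem g₁_le (x y : I) : g₁ x y ≤ 2816 :=
  sub_nonneg.mp <| sub_g₁_eq_sum_bernstein x y ▸
    sum_mul_bernstein_mul_bernstein_nonneg _ g₁BernsteinCoeff_nonneg x y

theorem stmt_4 (s u : ℝ) (hs : s ∈ Set.Icc (0:ℝ) 1) (hu : u ∈ Set.Icc (0:ℝ) 1) :
    208 * s ^ 6
      + 16 * u * (1 - s ^ 2) * (132 * s ^ 4 + 6 * s ^ 2 * (50 - 41 * s ^ 2) * u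
          + 4 * (35 * s ^ 4 - 61 * s ^ 2 + 44) * u ^ 2 + 9 * s ^ 2 * (1 - s ^ 2) * u ^ 3)
      + 288 * s * (1 - s ^ 2) * (1 - u ^ 2) * ((1 - s ^ 2) * u ^ 2
          + 2 * (3 + s ^ 2) * u + 3 * s ^ 2)
      + 1152 * (1 - s ^ 2) * (1 - u ^ 2) * (2 * (1 - s ^ 2) * u + s ^ 2)
    ≤ 2816 :=
  g₁_le ⟨s, hs⟩ ⟨u, hu⟩
end

section
/- If f ∈ 𝓡₁ (i.e., f analytic on 𝔻, f(0)=0, f'(0)=1, and Re(f'(z) + z f''(z)) > 0 on 𝔻), then the third Hankel determinant of inverse coefficients satisfies H₃(1)(f⁻¹) = (1/74649600)·(−97200c₁⁴c₂ − 186624c₁²c₄ + 172800c₁²c₂² + 331776c₂c₄ − 291600c₃² + 18225c₁⁶ + 259200c₁c₂c₃ − 204800c₂³), where 1 + Σ cₙzⁿ = f'(z) + z f''(z). -/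
/-!
Write `F k = f⁽ᵏ⁾(0)` and `G k = g⁽ᵏ⁾(0) = k! Aₖ`. Differentiating `(z f')' = ∑ cₙ zⁿ` gives
`n! cₙ = (n + 1) F (n + 1)`. Differentiating `f (g w) = w` five times (Faà di Bruno) and using
`G 1 = 1` expresses `F 2, …, F 5` through `G 2, …, G 5`. After these substitutions both sides of
the identity are the same polynomial in `A₂, …, A₅`.
-/

open Metric Set Filter Nat Topology

section TaylorCoefficients

variable {𝕜 : Type*} [NontriviallyNormedField 𝕜]

theorem hasFPowerSeriesAt_ofScalars_of_hasSum {h : 𝕜 → 𝕜} {c : ℕ → 𝕜} {x : 𝕜}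
    (hc : ∀ᶠ z in 𝓝 x, HasSum (fun n => c n * (z - x) ^ n) (h z)) :
    HasFPowerSeriesAt h (FormalMultilinearSeries.ofScalars 𝕜 c) x := by
  rw [hasFPowerSeriesAt_iff']
  simpa only [FormalMultilinearSeries.coeff_ofScalars, smul_eq_mul, mul_comm] using hc

variable [CompleteSpace 𝕜]

theorem HasFPowerSeriesAt.iteratedDeriv_eq_factorial_mul [CharZero 𝕜] {h : 𝕜 → 𝕜}
    {c : ℕ → 𝕜} {x : 𝕜} (hp : HasFPowerSeriesAt h (FormalMultilinearSeries.ofScalars 𝕜 c) x)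
    (n : ℕ) : iteratedDeriv n h x = n ! * c n := by
  have := FormalMultilinearSeries.ofScalars_series_injective 𝕜 𝕜
    (hp.eq_formalMultilinearSeries hp.analyticAt.hasFPowerSeriesAt)
  rw [congrFun this n, mul_div_cancel₀ _ (Nat.cast_ne_zero.2 n.factorial_ne_zero)]

theorem AnalyticAt.hasDerivAt_iteratedDeriv {f : 𝕜 → 𝕜} {z : 𝕜} (hf : AnalyticAt 𝕜 f z)
    (k : ℕ) : HasDerivAt (iteratedDeriv k f) (iteratedDeriv (k + 1) f z) z := by
  rw [iteratedDeriv_succ, iteratedDeriv_eq_iterate]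
  exact (hf.iterated_deriv k).differentiableAt.hasDerivAt

theorem iteratedDeriv_deriv_add_mul_deriv_deriv {f : 𝕜 → 𝕜} {s : Set 𝕜} (hs : IsOpen s)
    (hf : AnalyticOnNhd 𝕜 f s) (n : ℕ) :
    EqOn (iteratedDeriv n fun z => deriv f z + z * deriv (deriv f) z)
      (fun z => (n + 1) * iteratedDeriv (n + 1) f z + z * iteratedDeriv (n + 2) f z) s := by
  induction n with
  | zero =>
    intro z _
    simp only [iteratedDeriv_zero, iteratedDeriv_succ, Nat.cast_zero]
    ring
  | succ n ih =>
    intro z hz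
    have hd := ((hf z hz).hasDerivAt_iteratedDeriv (n + 1)).const_mul ((n : 𝕜) + 1) |>.fun_add
      ((hasDerivAt_id' z).fun_mul ((hf z hz).hasDerivAt_iteratedDeriv (n + 2)))
    rw [iteratedDeriv_succ, ih.deriv hs hz, hd.deriv]
    push_cast
    ring

theorem coeff_eq_of_hasSum_deriv_add_mul_deriv_deriv [CharZero 𝕜] {f : 𝕜 → 𝕜} {c : ℕ → 𝕜}
    {r : ℝ} (hr : 0 < r) (hf : AnalyticOnNhd 𝕜 f (ball 0 r))
    (hfc : ∀ z ∈ ball 0 r, HasSum (fun n => c n * z ^ n) (deriv f z + z * deriv (deriv f) z))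
    (n : ℕ) : c n = (n + 1) * iteratedDeriv (n + 1) f 0 / n ! := by
  rw [eq_div_iff (Nat.cast_ne_zero.2 n.factorial_ne_zero), mul_comm,
    ← (hasFPowerSeriesAt_ofScalars_of_hasSum (eventually_of_mem (ball_mem_nhds 0 hr)
      fun z hz => by simpa using hfc z hz)).iteratedDeriv_eq_factorial_mul,
    iteratedDeriv_deriv_add_mul_deriv_deriv isOpen_ball hf n (mem_ball_self hr)]
  ring

end TaylorCoefficients

theorem Set.EqOn.hasDerivAt_unique {𝕜 E : Type*} [NontriviallyNormedField 𝕜]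
    [NormedAddCommGroup E] [NormedSpace 𝕜 E] {F G F' G' : 𝕜 → E} {U : Set 𝕜} (hU : IsOpen U)
    (h : EqOn F G U) (hF : ∀ w ∈ U, HasDerivAt F (F' w) w)
    (hG : ∀ w ∈ U, HasDerivAt G (G' w) w) : EqOn F' G' U := fun w hw => by
  rw [← (hF w hw).deriv, ← (hG w hw).deriv]
  exact h.deriv hU hw

section FaaDiBruno

/- The hypotheses `hu`, `hv` below are the chain rule for `u k = f⁽ᵏ⁾ ∘ g` and `v k = g⁽ᵏ⁾`;
the lemmas compute the successive derivatives of `f ∘ g`. -/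
variable {𝕜 : Type*} [NontriviallyNormedField 𝕜] {u v : ℕ → 𝕜 → 𝕜} {w : 𝕜}

theorem hasDerivAt_faaDiBruno_two (hu : ∀ k, HasDerivAt (u k) (u (k + 1) w * v 1 w) w)
    (hv : ∀ k, HasDerivAt (v k) (v (k + 1) w) w) :
    HasDerivAt (fun w => u 1 w * v 1 w) (u 2 w * v 1 w ^ 2 + u 1 w * v 2 w) w :=
  ((hu 1).fun_mul (hv 1)).congr_deriv (by ring)

theorem hasDerivAt_faaDiBruno_three (hu : ∀ k, HasDerivAt (u k) (u (k + 1) w * v 1 w) w)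
    (hv : ∀ k, HasDerivAt (v k) (v (k + 1) w) w) :
    HasDerivAt (fun w => u 2 w * v 1 w ^ 2 + u 1 w * v 2 w)
      (u 3 w * v 1 w ^ 3 + 3 * u 2 w * v 1 w * v 2 w + u 1 w * v 3 w) w := by
  refine (((hu 2).fun_mul ((hv 1).fun_pow 2)).fun_add ((hu 1).fun_mul (hv 2))).congr_deriv ?_
  ring

theorem hasDerivAt_faaDiBruno_four (hu : ∀ k, HasDerivAt (u k) (u (k + 1) w * v 1 w) w)
    (hv : ∀ k, HasDerivAt (v k) (v (k + 1) w) w) :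
    HasDerivAt (fun w => u 3 w * v 1 w ^ 3 + 3 * u 2 w * v 1 w * v 2 w + u 1 w * v 3 w)
      (u 4 w * v 1 w ^ 4 + 6 * u 3 w * v 1 w ^ 2 * v 2 w + 3 * u 2 w * v 2 w ^ 2
        + 4 * u 2 w * v 1 w * v 3 w + u 1 w * v 4 w) w := by
  refine ((((hu 3).fun_mul ((hv 1).fun_pow 3)).fun_add
    ((((hu 2).const_mul 3).fun_mul (hv 1)).fun_mul (hv 2))).fun_add
    ((hu 1).fun_mul (hv 3))).congr_deriv ?_
  ring

theorem hasDerivAt_faaDiBruno_five (hu : ∀ k, HasDerivAt (u k) (u (k + 1) w * v 1 w) w)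
    (hv : ∀ k, HasDerivAt (v k) (v (k + 1) w) w) :
    HasDerivAt (fun w => u 4 w * v 1 w ^ 4 + 6 * u 3 w * v 1 w ^ 2 * v 2 w
        + 3 * u 2 w * v 2 w ^ 2 + 4 * u 2 w * v 1 w * v 3 w + u 1 w * v 4 w)
      (u 5 w * v 1 w ^ 5 + 10 * u 4 w * v 1 w ^ 3 * v 2 w + 15 * u 3 w * v 1 w * v 2 w ^ 2
        + 10 * u 3 w * v 1 w ^ 2 * v 3 w + 10 * u 2 w * v 2 w * v 3 w
        + 5 * u 2 w * v 1 w * v 4 w + u 1 w * v 5 w) w := by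
  refine ((((((hu 4).fun_mul ((hv 1).fun_pow 4)).fun_add
    ((((hu 3).const_mul 6).fun_mul ((hv 1).fun_pow 2)).fun_mul (hv 2))).fun_add
    (((hu 2).const_mul 3).fun_mul ((hv 2).fun_pow 2))).fun_add
    ((((hu 2).const_mul 4).fun_mul (hv 1)).fun_mul (hv 3))).fun_add
    ((hu 1).fun_mul (hv 4))).congr_deriv ?_
  ring

theorem inverse_derivs_of_eqOn_id {U : Set 𝕜} (hU : IsOpen U)
    (hu : ∀ k, ∀ w ∈ U, HasDerivAt (u k) (u (k + 1) w * v 1 w) w)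
    (hv : ∀ k, ∀ w ∈ U, HasDerivAt (v k) (v (k + 1) w) w)
    (hid : EqOn (u 0) id U) (hw : w ∈ U) (hv1 : v 1 w = 1) :
    u 2 w = -v 2 w ∧ u 3 w = 3 * v 2 w ^ 2 - v 3 w ∧
      u 4 w = -15 * v 2 w ^ 3 + 10 * v 2 w * v 3 w - v 4 w ∧
      u 5 w = 105 * v 2 w ^ 4 - 105 * v 2 w ^ 2 * v 3 w + 15 * v 2 w * v 4 w
        + 10 * v 3 w ^ 2 - v 5 w := by
  have e1 := hid.hasDerivAt_unique hU (hu 0) (fun w _ => hasDerivAt_id w)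
  have e2 := e1.hasDerivAt_unique hU
    (fun w hw => hasDerivAt_faaDiBruno_two (hu · w hw) (hv · w hw))
    (fun w _ => hasDerivAt_const w (1 : 𝕜))
  have e3 := e2.hasDerivAt_unique hU
    (fun w hw => hasDerivAt_faaDiBruno_three (hu · w hw) (hv · w hw))
    (fun w _ => hasDerivAt_const w (0 : 𝕜))
  have e4 := e3.hasDerivAt_unique hU
    (fun w hw => hasDerivAt_faaDiBruno_four (hu · w hw) (hv · w hw))
    (fun w _ => hasDerivAt_const w (0 : 𝕜))
  have e5 := e4.hasDerivAt_unique hU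
    (fun w hw => hasDerivAt_faaDiBruno_five (hu · w hw) (hv · w hw))
    (fun w _ => hasDerivAt_const w (0 : 𝕜))
  have h1 := e1 hw
  have h2 := e2 hw
  have h3 := e3 hw
  have h4 := e4 hw
  have h5 := e5 hw
  beta_reduce at h1 h2 h3 h4 h5
  rw [hv1, mul_one] at h1
  rw [hv1] at h2 h3 h4 h5
  have hu2 : u 2 w = -v 2 w := by linear_combination h2 - v 2 w * h1
  have hu3 : u 3 w = 3 * v 2 w ^ 2 - v 3 w := by
    linear_combination h3 - 3 * v 2 w * hu2 - v 3 w * h1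
  have hu4 : u 4 w = -15 * v 2 w ^ 3 + 10 * v 2 w * v 3 w - v 4 w := by
    linear_combination h4 - 6 * v 2 w * hu3 - (3 * v 2 w ^ 2 + 4 * v 3 w) * hu2 - v 4 w * h1
  refine ⟨hu2, hu3, hu4, ?_⟩
  linear_combination h5 - 10 * v 2 w * hu4 - (15 * v 2 w ^ 2 + 10 * v 3 w) * hu3
    - (10 * v 2 w * v 3 w + 5 * v 4 w) * hu2 - v 5 w * h1

end FaaDiBruno

theorem stmt_12_general (f g : ℂ → ℂ) (c A : ℕ → ℂ)
    (hf : AnalyticOnNhd ℂ f (ball (0:ℂ) 1))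
    (hfc : ∀ z ∈ ball (0:ℂ) 1,
      HasSum (fun n => c n * z ^ n) (deriv f z + z * deriv (deriv f) z))
    (hA0 : A 0 = 0) (hA1 : A 1 = 1)
    (hgA : ∀ w : ℂ, ‖w‖ ≤ 1/4 → HasSum (fun n => A n * w ^ n) (g w))
    (hgball : ∀ w : ℂ, ‖w‖ ≤ 1/4 → g w ∈ ball (0:ℂ) 1)
    (hinv : ∀ w : ℂ, ‖w‖ ≤ 1/4 → f (g w) = w) :
    2 * A 2 * A 3 * A 4 - A 3 ^ 3 - A 4 ^ 2 + A 3 * A 5 - A 2 ^ 2 * A 5 =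
      (1 / 74649600) * (-97200 * c 1 ^ 4 * c 2 - 186624 * c 1 ^ 2 * c 4
        + 172800 * c 1 ^ 2 * c 2 ^ 2 + 331776 * c 2 * c 4 - 291600 * c 3 ^ 2
        + 18225 * c 1 ^ 6 + 259200 * c 1 * c 2 * c 3 - 204800 * c 2 ^ 3) := by
  have hgp : HasFPowerSeriesAt g (FormalMultilinearSeries.ofScalars ℂ A) 0 :=
    hasFPowerSeriesAt_ofScalars_of_hasSum <|
      eventually_of_mem (closedBall_mem_nhds 0 (by norm_num : (0 : ℝ) < 1 / 4)) fun w hw => by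
        simpa using hgA w (mem_closedBall_zero_iff.1 hw)
  have hA := hgp.iteratedDeriv_eq_factorial_mul
  have hg0 : g 0 = 0 := by simpa [hA0] using hA 0
  set U := {w | AnalyticAt ℂ g w} ∩ ball 0 (1 / 4)
  have hU4 : ∀ w ∈ U, ‖w‖ ≤ 1 / 4 := fun w hw => (mem_ball_zero_iff.1 hw.2).le
  obtain ⟨hF2, hF3, hF4, hF5⟩ := inverse_derivs_of_eqOn_id
    (u := fun k w => iteratedDeriv k f (g w)) (v := fun k => iteratedDeriv k g)
    ((isOpen_analyticAt ℂ g).inter isOpen_ball)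
    (fun k w hw => ((hf _ (hgball w (hU4 w hw))).hasDerivAt_iteratedDeriv k).comp w
      (by simpa using hw.1.hasDerivAt_iteratedDeriv 0))
    (fun k w hw => hw.1.hasDerivAt_iteratedDeriv k)
    (fun w hw => by simpa using hinv w (hU4 w hw))
    ⟨hgp.analyticAt, mem_ball_self (by norm_num)⟩ (by simp [hA, hA1])
  simp only [hg0, hA] at hF2 hF3 hF4 hF5
  simp only [coeff_eq_of_hasSum_deriv_add_mul_deriv_deriv one_pos hf hfc, hF2, hF3, hF4, hF5]
  norm_num [factorial]
  ring

/-- Third Hankel determinant of inverse coefficients for `f ∈ 𝓡₁` in terms of the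
coefficients of `(z f'(z))' = f'(z) + z f''(z)`. -/
theorem stmt_12 (f g : ℂ → ℂ) (c A : ℕ → ℂ)
    (hf : AnalyticOnNhd ℂ f (ball (0:ℂ) 1))
    (hf0 : f 0 = 0) (hf1 : deriv f 0 = 1) (hc0 : c 0 = 1)
    (hfc : ∀ z ∈ ball (0:ℂ) 1,
      HasSum (fun n => c n * z ^ n) (deriv f z + z * deriv (deriv f) z))
    (hre : ∀ z ∈ ball (0:ℂ) 1, 0 < (deriv f z + z * deriv (deriv f) z).re)
    (hA0 : A 0 = 0) (hA1 : A 1 = 1)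
    (hgA : ∀ w : ℂ, ‖w‖ ≤ 1/4 → HasSum (fun n => A n * w ^ n) (g w))
    (hgball : ∀ w : ℂ, ‖w‖ ≤ 1/4 → g w ∈ ball (0:ℂ) 1)
    (hinv : ∀ w : ℂ, ‖w‖ ≤ 1/4 → f (g w) = w) :
    2 * A 2 * A 3 * A 4 - A 3 ^ 3 - A 4 ^ 2 + A 3 * A 5 - A 2 ^ 2 * A 5 =
      (1 / 74649600) * (-97200 * c 1 ^ 4 * c 2 - 186624 * c 1 ^ 2 * c 4
        + 172800 * c 1 ^ 2 * c 2 ^ 2 + 331776 * c 2 * c 4 - 291600 * c 3 ^ 2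
        + 18225 * c 1 ^ 6 + 259200 * c 1 * c 2 * c 3 - 204800 * c 2 ^ 3) :=
  stmt_12_general f g c A hf hfc hA0 hA1 hgA hgball hinv
end

section
/- The function f*(z) = z + (1/8)z⁴ + (2/49)z⁷ + ... defined by (z f*'(z))' = (1+z³)/(1−z³) has coefficients a₂ = a₃ = 0, a₄ = 1/8, a₅ = 0, its inverse coefficients satisfy A₂ = A₃ = 0, A₄ = −1/8, A₅ = 0, and hence |H₃(1)(f*⁻¹)| = 1/64. -/
/-!
Since `z (z f')' = ∑ n² aₙ zⁿ` and `z (1 + z³) / (1 - z³) = 2z / (1 - z³) - z`, comparing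
coefficients gives `n² aₙ = 2·[n ≡ 1 mod 3] - [n = 1]`, so `f(z) = z + z⁴/8 + O(z⁶)`.
For the inverse, `f (g w) = w` gives `g = w - g⁴/8 + O(w⁶)`. Bootstrapping once,
`g = w + O(w⁴)`, so `g⁴ = w⁴ + O(w⁷)` and `g = w - w⁴/8 + O(w⁶)`, which determines
`A₂, …, A₅`.
-/

open Metric

open FormalMultilinearSeries Filter Asymptotics Topology

section PowerSeries

variable {c d : ℕ → ℂ} {h : ℂ → ℂ}

theorem hasFPowerSeriesOnBall_ofScalars_of_hasSum {r : NNReal} (hr : 0 < r)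
    (hs : ∀ z : ℂ, ‖z‖ < r → HasSum (fun n => c n * z ^ n) (h z)) :
    HasFPowerSeriesOnBall h (ofScalars ℂ c) 0 r where
  r_le := by
    refine ENNReal.le_of_forall_nnreal_lt fun ρ hρ => le_radius_of_summable _ ?_
    have hρ' : ‖((ρ : ℝ) : ℂ)‖ < r := by simpa using hρ
    refine (hs _ hρ').summable.norm.congr fun n => ?_
    simp
  r_pos := mod_cast hr
  hasSum {y} hy := by
    have hy' : ‖y‖ < r := by simpa using hy
    simpa [ofScalars_apply_eq, mul_comm] using hs y hy'

theorem coeff_eq_of_hasSum_of_hasSum {r r' : NNReal} (hr : 0 < r) (hr' : 0 < r')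
    (hc : ∀ z : ℂ, ‖z‖ < r → HasSum (fun n => c n * z ^ n) (h z))
    (hd : ∀ z : ℂ, ‖z‖ < r' → HasSum (fun n => d n * z ^ n) (h z)) : c = d :=
  ofScalars_series_injective ℂ ℂ <|
    (hasFPowerSeriesOnBall_ofScalars_of_hasSum hr hc).hasFPowerSeriesAt.eq_formalMultilinearSeries
      (hasFPowerSeriesOnBall_ofScalars_of_hasSum hr' hd).hasFPowerSeriesAt

theorem HasFPowerSeriesOnBall.hasSum_mul_deriv {r : NNReal}
    (H : HasFPowerSeriesOnBall h (ofScalars ℂ c) 0 r) {z : ℂ} (hz : ‖z‖ < r) :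
    HasSum (fun n : ℕ => n * c n * z ^ n) (z * deriv h z) := by
  have hz' : z ∈ eball (0 : ℂ) r := by simpa [← coe_nnnorm] using hz
  have hsum := (H.fderiv.hasSum hz').mapL (ContinuousLinearMap.apply ℂ ℂ z)
  rw [zero_add, ContinuousLinearMap.apply_apply, fderiv_eq_smul_deriv, smul_eq_mul] at hsum
  refine (hasSum_nat_add_iff' 1).mp ?_
  convert hsum using 1
  · ext n
    simp only [ContinuousLinearMap.apply_apply, derivSeries_apply_diag, ofScalars_apply_eq]
    push_cast
    simp only [smul_eq_mul]
    ring
  · simp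

theorem HasFPowerSeriesAt.isBigO_sub_sum_range (H : HasFPowerSeriesAt h (ofScalars ℂ c) 0)
    (n : ℕ) :
    (fun y => h y - ∑ k ∈ Finset.range n, c k * y ^ k) =O[𝓝 0] fun y => ‖y‖ ^ n := by
  simpa [partialSum, ofScalars_apply_eq, mul_comm] using H.isBigO_sub_partialSum_pow n

end PowerSeries

noncomputable def cubicRatioCoeff (n : ℕ) : ℂ :=
  2 * (if n % 3 = 1 then 1 else 0) - if n = 1 then 1 else 0

theorem hasSum_pow_of_mod_three_eq_one {z : ℂ} (hz : ‖z‖ < 1) :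
    HasSum (fun n : ℕ => if n % 3 = 1 then z ^ n else 0) (z / (1 - z ^ 3)) := by
  have hinj : Function.Injective fun k : ℕ => 3 * k + 1 := fun a b hab => by simpa using hab
  rw [← hinj.hasSum_iff]
  · have hz3 : ‖z ^ 3‖ < 1 := by
      rw [norm_pow]
      exact pow_lt_one₀ (norm_nonneg z) hz three_ne_zero
    rw [div_eq_mul_inv]
    refine ((hasSum_geometric_of_norm_lt_one hz3).mul_left z).congr_fun fun k => ?_
    rw [Function.comp_apply, if_pos (by omega), pow_succ, pow_mul, mul_comm]
  · intro n hn
    have : n % 3 ≠ 1 := fun h => hn ⟨n / 3, show 3 * (n / 3) + 1 = n by omega⟩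
    simp [this]

theorem hasSum_cubicRatioCoeff {z : ℂ} (hz : ‖z‖ < 1) :
    HasSum (fun n => cubicRatioCoeff n * z ^ n) (z * ((1 + z ^ 3) / (1 - z ^ 3))) := by
  have hne : 1 - z ^ 3 ≠ 0 := by
    intro h0
    have hz3 : ‖z‖ ^ 3 < 1 := pow_lt_one₀ (norm_nonneg z) hz three_ne_zero
    rw [← norm_pow, ← sub_eq_zero.mp h0, norm_one] at hz3
    exact hz3.false
  rw [show z * ((1 + z ^ 3) / (1 - z ^ 3)) = 2 * (z / (1 - z ^ 3)) - z by field_simp; ring]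
  refine ((hasSum_pow_of_mod_three_eq_one hz).mul_left 2).sub (hasSum_ite_eq 1 z) |>.congr_fun
    fun n => ?_
  unfold cubicRatioCoeff
  split_ifs <;> simp_all
  ring

theorem sq_mul_coeff_eq_cubicRatioCoeff {f : ℂ → ℂ} {a : ℕ → ℂ}
    (hfa : ∀ z ∈ ball (0:ℂ) 1, HasSum (fun n => a n * z ^ n) (f z))
    (hode : ∀ z ∈ ball (0:ℂ) 1,
      deriv f z + z * deriv (deriv f) z = (1 + z ^ 3) / (1 - z ^ 3)) (n : ℕ) :
    (n : ℂ) ^ 2 * a n = cubicRatioCoeff n := by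
  have hball {z : ℂ} (hz : ‖z‖ < (1 : NNReal)) : z ∈ ball (0 : ℂ) 1 := by simpa using hz
  have hf : HasFPowerSeriesOnBall f (ofScalars ℂ a) 0 (1 : NNReal) :=
    hasFPowerSeriesOnBall_ofScalars_of_hasSum one_pos fun z hz => hfa z (hball hz)
  have hM : HasFPowerSeriesOnBall (fun z => z * deriv f z) (ofScalars ℂ fun n => n * a n) 0
      (1 : NNReal) :=
    hasFPowerSeriesOnBall_ofScalars_of_hasSum one_pos fun z hz => hf.hasSum_mul_deriv hz
  have hderiv {z : ℂ} (hz : ‖z‖ < (1 : NNReal)) :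
      deriv (fun z => z * deriv f z) z = (1 + z ^ 3) / (1 - z ^ 3) := by
    have hz' : z ∈ eball (0 : ℂ) (1 : NNReal) := by simpa [← coe_nnnorm, ← enorm_lt_coe] using hz
    have hdf : DifferentiableAt ℂ (deriv f) z :=
      (hf.analyticAt_of_mem hz').deriv.differentiableAt
    rw [deriv_fun_mul differentiableAt_fun_id hdf, deriv_id'', one_mul, hode z (hball hz)]
  have key := coeff_eq_of_hasSum_of_hasSum (c := fun n => (n : ℂ) ^ 2 * a n) one_pos one_pos
    (fun z hz => by
      rw [← hderiv hz]
      exact (hM.hasSum_mul_deriv hz).congr_fun fun n => by ring)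
    (fun z hz => hasSum_cubicRatioCoeff (by simpa using hz))
  exact congrFun key n

section Asymptotics

variable {𝕜 : Type*} [NontriviallyNormedField 𝕜]

theorem isBigO_norm_pow_of_le {m n : ℕ} (h : m ≤ n) :
    (fun x : 𝕜 => ‖x‖ ^ n) =O[𝓝 0] fun x => ‖x‖ ^ m := by
  rcases h.lt_or_eq with h | rfl
  · exact (isLittleO_norm_pow_norm_pow h).isBigO
  · exact isBigO_refl _ _

theorem isBigO_pow_norm_pow (n : ℕ) : (fun x : 𝕜 => x ^ n) =O[𝓝 0] fun x => ‖x‖ ^ n :=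
  isBigO_of_le _ fun x => by simp

theorem eq_zero_of_isBigO_mul_pow {a : 𝕜} {n : ℕ}
    (h : (fun x : 𝕜 => a * x ^ n) =O[𝓝 0] fun x => ‖x‖ ^ (n + 1)) : a = 0 := by
  have := (h.congr_left fun x => by
    simp [ContinuousMultilinearMap.mkPiRing_apply, mul_comm]).continuousMultilinearMap_apply_eq_zero
    (p := ContinuousMultilinearMap.mkPiRing 𝕜 (Fin n) a) 1
  simpa using this

theorem coeff_eq_zero_of_isBigO_sum_range {c : ℕ → 𝕜} {n : ℕ}
    (h : (fun x : 𝕜 => ∑ k ∈ Finset.range n, c k * x ^ k) =O[𝓝 0] fun x => ‖x‖ ^ n) :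
    ∀ k < n, c k = 0 := by
  induction n with
  | zero => simp
  | succ n ih =>
    have hlower : ∀ k < n, c k = 0 := ih <| by
      refine ((h.trans (isBigO_norm_pow_of_le n.le_succ)).sub
        ((isBigO_pow_norm_pow n).const_mul_left (c n))).congr_left fun x => ?_
      simp [Finset.sum_range_succ]
    have hn : c n = 0 := eq_zero_of_isBigO_mul_pow <| h.congr_left fun x => by
      rw [Finset.sum_range_succ, Finset.sum_eq_zero fun k hk => by
        rw [hlower k (Finset.mem_range.mp hk), zero_mul], zero_add]
    intro k hk
    rcases (Nat.lt_succ_iff.mp hk).lt_or_eq with hk | rfl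
    exacts [hlower k hk, hn]

end Asymptotics

theorem isBigO_sub_of_rightInverse {f g : ℂ → ℂ}
    (hf : (fun z => f z - (z + z ^ 4 / 8)) =O[𝓝 0] fun z => ‖z‖ ^ 6)
    (hg : g =O[𝓝 0] fun w => ‖w‖) (hinv : ∀ᶠ w in 𝓝 0, f (g w) = w) :
    (fun w => g w - (w - w ^ 4 / 8)) =O[𝓝 0] fun w => ‖w‖ ^ 6 := by
  have hg0 : Tendsto g (𝓝 0) (𝓝 0) :=
    hg.trans_tendsto (by simpa using (continuous_norm.tendsto (0 : ℂ)))
  have hfg : (fun w => w - (g w + g w ^ 4 / 8)) =O[𝓝 0] fun w => ‖w‖ ^ 6 := by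
    refine ((hf.comp_tendsto hg0).trans ?_).congr' (hinv.mono fun w hw => by simp [hw]) .rfl
    show (fun w => ‖g w‖ ^ 6) =O[𝓝 0] _
    simpa using (hg.pow 6).norm_left
  have hg4 : (fun w => g w ^ 4) =O[𝓝 0] fun w => ‖w‖ ^ 4 := hg.pow 4
  have hgw : (fun w => g w - w) =O[𝓝 0] fun w => ‖w‖ ^ 4 :=
    ((hfg.trans (isBigO_norm_pow_of_le (by norm_num))).neg_left.sub
      (hg4.const_mul_left (1 / 8))).congr_left fun w => by ring
  -- `g⁴ - w⁴ = (g - w)(g + w)(g² + w²)` has order `4 + 1 + 2 = 7`.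
  have hdiff : (fun w => g w ^ 4 - w ^ 4) =O[𝓝 0] fun w => ‖w‖ ^ 6 := by
    have hsum : (fun w => g w + w) =O[𝓝 0] fun w => ‖w‖ :=
      hg.add (isBigO_norm_right.mpr (isBigO_refl _ _))
    have hsq : (fun w => g w ^ 2 + w ^ 2) =O[𝓝 0] fun w => ‖w‖ ^ 2 :=
      (hg.pow 2).add (isBigO_pow_norm_pow 2)
    refine (((hgw.mul hsum).mul hsq).trans ?_).congr_left fun w => by ring
    exact (isBigO_norm_pow_of_le (by norm_num : 6 ≤ 7)).congr_left fun w => by ring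
  exact (hfg.neg_left.sub (hdiff.const_mul_left (1 / 8))).congr_left fun w => by ring

theorem coeff_of_rightInverse_of_isBigO {f g : ℂ → ℂ} {A : ℕ → ℂ}
    (hf : (fun z => f z - (z + z ^ 4 / 8)) =O[𝓝 0] fun z => ‖z‖ ^ 6)
    (hg : HasFPowerSeriesAt g (ofScalars ℂ A) 0) (hA0 : A 0 = 0)
    (hinv : ∀ᶠ w in 𝓝 0, f (g w) = w) :
    A 2 = 0 ∧ A 3 = 0 ∧ A 4 = -1 / 8 ∧ A 5 = 0 := by
  have hg1 : g =O[𝓝 0] fun w => ‖w‖ := by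
    simpa [hA0] using hg.isBigO_sub_sum_range 1
  set b : ℕ → ℂ := fun k => if k = 1 then 1 else if k = 4 then -1 / 8 else 0
  have hpoly : (fun w => ∑ k ∈ Finset.range 6, (A k - b k) * w ^ k) =O[𝓝 0]
      fun w => ‖w‖ ^ 6 :=
    ((isBigO_sub_of_rightInverse hf hg1 hinv).sub (hg.isBigO_sub_sum_range 6)).congr_left
      fun w => by simp [b, Finset.sum_range_succ]; ring
  have hcoeff := coeff_eq_zero_of_isBigO_sum_range hpoly
  refine ⟨?_, ?_, ?_, ?_⟩
  · simpa [b] using hcoeff 2 (by norm_num)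
  · simpa [b] using hcoeff 3 (by norm_num)
  · simpa [b, sub_eq_zero] using hcoeff 4 (by norm_num)
  · simpa [b] using hcoeff 5 (by norm_num)

theorem stmt_14_general (f g : ℂ → ℂ) (a A : ℕ → ℂ)
    (ha0 : a 0 = 0)
    (hfa : ∀ z ∈ ball (0:ℂ) 1, HasSum (fun n => a n * z ^ n) (f z))
    (hode : ∀ z ∈ ball (0:ℂ) 1,
      deriv f z + z * deriv (deriv f) z = (1 + z ^ 3) / (1 - z ^ 3))
    (hA0 : A 0 = 0)
    (hgA : ∀ w : ℂ, ‖w‖ ≤ 1/4 → HasSum (fun n => A n * w ^ n) (g w))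
    (hinv : ∀ w : ℂ, ‖w‖ ≤ 1/4 → f (g w) = w) :
    a 2 = 0 ∧ a 3 = 0 ∧ a 4 = 1/8 ∧ a 5 = 0 ∧
    A 2 = 0 ∧ A 3 = 0 ∧ A 4 = -1/8 ∧ A 5 = 0 ∧
    ‖2 * A 2 * A 3 * A 4 - A 3 ^ 3 - A 4 ^ 2 + A 3 * A 5 - A 2 ^ 2 * A 5‖
      = 1 / 64 := by
  have hcoeff := sq_mul_coeff_eq_cubicRatioCoeff hfa hode
  have hc1 := hcoeff 1
  have hc2 := hcoeff 2
  have hc3 := hcoeff 3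
  have hc4 := hcoeff 4
  have hc5 := hcoeff 5
  norm_num [cubicRatioCoeff] at hc1 hc2 hc3 hc4 hc5
  have ha4 : a 4 = 1 / 8 := by linear_combination hc4 / 16
  have hf : (fun z => f z - (z + z ^ 4 / 8)) =O[𝓝 0] fun z => ‖z‖ ^ 6 :=
    ((hasFPowerSeriesOnBall_ofScalars_of_hasSum one_pos fun z hz => hfa z (by simpa using hz)
      ).hasFPowerSeriesAt.isBigO_sub_sum_range 6).congr_left fun z => by
        simp [Finset.sum_range_succ, ha0, hc1, hc2, hc3, ha4, hc5]; ring
  have hg : HasFPowerSeriesAt g (ofScalars ℂ A) 0 :=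
    (hasFPowerSeriesOnBall_ofScalars_of_hasSum (r := 1 / 4) (by norm_num)
      fun w hw => hgA w (by simpa using hw.le)).hasFPowerSeriesAt
  have hinv' : ∀ᶠ w in 𝓝 0, f (g w) = w := by
    filter_upwards [closedBall_mem_nhds (0 : ℂ) (by norm_num : (0 : ℝ) < 1 / 4)] with w hw
    exact hinv w (by simpa using hw)
  obtain ⟨hA2, hA3, hA4, hA5⟩ := coeff_of_rightInverse_of_isBigO hf hg hA0 hinv'
  refine ⟨hc2, hc3, ha4, hc5, hA2, hA3, hA4, hA5, ?_⟩
  rw [hA2, hA3, hA4, hA5]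
  norm_num

/-- The extremal function `f⋆` with `(z f⋆'(z))' = (1+z³)/(1−z³)`: its coefficients,
inverse coefficients, and Hankel determinant value. -/
theorem stmt_14 (f g : ℂ → ℂ) (a A : ℕ → ℂ)
    (hf : AnalyticOnNhd ℂ f (ball (0:ℂ) 1))
    (ha0 : a 0 = 0) (ha1 : a 1 = 1)
    (hfa : ∀ z ∈ ball (0:ℂ) 1, HasSum (fun n => a n * z ^ n) (f z))
    (hode : ∀ z ∈ ball (0:ℂ) 1,
      deriv f z + z * deriv (deriv f) z = (1 + z ^ 3) / (1 - z ^ 3))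
    (hA0 : A 0 = 0) (hA1 : A 1 = 1)
    (hgA : ∀ w : ℂ, ‖w‖ ≤ 1/4 → HasSum (fun n => A n * w ^ n) (g w))
    (hgball : ∀ w : ℂ, ‖w‖ ≤ 1/4 → g w ∈ ball (0:ℂ) 1)
    (hinv : ∀ w : ℂ, ‖w‖ ≤ 1/4 → f (g w) = w) :
    a 2 = 0 ∧ a 3 = 0 ∧ a 4 = 1/8 ∧ a 5 = 0 ∧
    A 2 = 0 ∧ A 3 = 0 ∧ A 4 = -1/8 ∧ A 5 = 0 ∧
    ‖2 * A 2 * A 3 * A 4 - A 3 ^ 3 - A 4 ^ 2 + A 3 * A 5 - A 2 ^ 2 * A 5‖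
      = 1 / 64 :=
  stmt_14_general f g a A ha0 hfa hode hA0 hgA hinv
end
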